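/- Let X be a topological space, f : D² → X continuous, and {D̂_j}_{j∈J} a finite family of pairwise disjoint closed round subdiscs of the open unit disc D², with boundaries σ_j = ∂D̂_j. Suppose for each j the loop f∘σ_j is null-homotopic in an open subset U ⊂ X, via maps g_j : D² → U with g_j|_{∂D²} = f∘σ_j (suitably reparametrized), and suppose f(D² \ ⋃_j int D̂_j) ⊂ U. Then f|_{∂D²} is null-homotopic in U. -/

import Mathlib

/-!
Glue `f` and the discs `g j`: on each closed disc `closedBall (x j) (r j)` use `g j`
precomposed with the homothety onto the unit disc, elsewhere use `f`. Disjointness makes this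
well defined, and the boundary condition on `g j` makes the two prescriptions agree on each
circle `sphere (x j) (r j)`, so the glued map is continuous by the pasting lemma for the finite
closed cover by the discs and the complement of the open discs. Its image lies in `U` piece by
piece, and it equals `f` on the unit circle because every disc lies in the open unit disc.
-/

open Metric Set

variable {E X J : Type*} [NormedAddCommGroup E] [NormedSpace ℝ E]

lemma inv_smul_sub_mem_closedBall {c y : E} {ρ : ℝ} (hρ : 0 < ρ) (hy : y ∈ closedBall c ρ) :
    ρ⁻¹ • (y - c) ∈ closedBall (0 : E) 1 := by
  rw [mem_closedBall_zero_iff, norm_smul, norm_inv, Real.norm_of_nonneg hρ.le,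
    inv_mul_le_iff₀ hρ, mul_one, ← dist_eq_norm]
  exact hy

lemma inv_smul_sub_mem_sphere {c y : E} {ρ : ℝ} (hρ : 0 < ρ) (hy : y ∈ sphere c ρ) :
    ρ⁻¹ • (y - c) ∈ sphere (0 : E) 1 := by
  rw [mem_sphere_zero_iff_norm, norm_smul, norm_inv, Real.norm_of_nonneg hρ.le,
    ← dist_eq_norm, mem_sphere.1 hy, inv_mul_cancel₀ hρ.ne']

open Classical in
noncomputable def glueDiscs (f : E → X) (x : J → E) (r : J → ℝ) (g : J → E → X) : E → X :=
  fun y => if hy : ∃ j, y ∈ closedBall (x j) (r j) then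
    g hy.choose ((r hy.choose)⁻¹ • (y - x hy.choose)) else f y

section glueDiscs

variable {f : E → X} {x : J → E} {r : J → ℝ} {g : J → E → X}

lemma glueDiscs_eq_of_mem_closedBall
    (hdisj : Pairwise fun i j => Disjoint (closedBall (x i) (r i)) (closedBall (x j) (r j)))
    {j : J} {y : E} (hy : y ∈ closedBall (x j) (r j)) :
    glueDiscs f x r g y = g j ((r j)⁻¹ • (y - x j)) := by
  have hex : ∃ i, y ∈ closedBall (x i) (r i) := ⟨j, hy⟩
  have hchoose : hex.choose = j := hdisj.eq (not_disjoint_iff.2 ⟨y, hex.choose_spec, hy⟩)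
  rw [glueDiscs, dif_pos hex, hchoose]

lemma glueDiscs_eq_of_forall_notMem_closedBall {y : E}
    (hy : ∀ j, y ∉ closedBall (x j) (r j)) : glueDiscs f x r g y = f y :=
  dif_neg (not_exists.2 hy)

lemma glueDiscs_eq_of_notMem_iUnion_ball (hr : ∀ j, 0 < r j)
    (hdisj : Pairwise fun i j => Disjoint (closedBall (x i) (r i)) (closedBall (x j) (r j)))
    (hbdry : ∀ j, ∀ v ∈ sphere (0 : E) 1, g j v = f (x j + r j • v))
    {y : E} (hy : y ∉ ⋃ j, ball (x j) (r j)) : glueDiscs f x r g y = f y := by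
  by_cases hmem : ∃ j, y ∈ closedBall (x j) (r j)
  · obtain ⟨j, hyj⟩ := hmem
    have hsph : y ∈ sphere (x j) (r j) := by
      rw [← closedBall_sdiff_ball]
      exact ⟨hyj, fun h => hy (mem_iUnion.2 ⟨j, h⟩)⟩
    rw [glueDiscs_eq_of_mem_closedBall hdisj hyj, hbdry j _ (inv_smul_sub_mem_sphere (hr j) hsph),
      smul_inv_smul₀ (hr j).ne', add_sub_cancel]
  · exact dif_neg hmem

lemma continuous_glueDiscs [TopologicalSpace X] [Finite J] (hf : Continuous f) (hg : ∀ j, Continuous (g j))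
    (hr : ∀ j, 0 < r j)
    (hdisj : Pairwise fun i j => Disjoint (closedBall (x i) (r i)) (closedBall (x j) (r j)))
    (hbdry : ∀ j, ∀ v ∈ sphere (0 : E) 1, g j v = f (x j + r j • v)) :
    Continuous (glueDiscs f x r g) := by
  have hdiscs : ContinuousOn (glueDiscs f x r g) (⋃ j, closedBall (x j) (r j)) :=
    (locallyFinite_of_finite _).continuousOn_iUnion (fun _ => isClosed_closedBall) fun j =>
      ((hg j).comp ((continuous_id.sub continuous_const).const_smul _)).continuousOn.congr
        fun _ hy => glueDiscs_eq_of_mem_closedBall hdisj hy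
  have houtside : ContinuousOn (glueDiscs f x r g) (⋃ j, ball (x j) (r j))ᶜ :=
    hf.continuousOn.congr fun _ hy => glueDiscs_eq_of_notMem_iUnion_ball hr hdisj hbdry hy
  have hcover : (⋃ j, closedBall (x j) (r j)) ∪ (⋃ j, ball (x j) (r j))ᶜ = univ :=
    eq_univ_of_subset (union_subset_union_left _ (iUnion_mono fun _ => ball_subset_closedBall))
      (union_compl_self _)
  rw [← continuousOn_univ, ← hcover]
  exact hdiscs.union_of_isClosed houtside (isClosed_iUnion_of_finite fun _ => isClosed_closedBall)
    (isOpen_iUnion fun _ => isOpen_ball).isClosed_compl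

lemma glueDiscs_image_subset {S : Set E} {U : Set X} (hr : ∀ j, 0 < r j)
    (hdisj : Pairwise fun i j => Disjoint (closedBall (x i) (r i)) (closedBall (x j) (r j)))
    (hgU : ∀ j, g j '' closedBall (0 : E) 1 ⊆ U) (hfU : f '' (S \ ⋃ j, ball (x j) (r j)) ⊆ U) :
    glueDiscs f x r g '' S ⊆ U := by
  rintro _ ⟨y, hyS, rfl⟩
  by_cases hmem : ∃ j, y ∈ closedBall (x j) (r j)
  · obtain ⟨j, hyj⟩ := hmem
    rw [glueDiscs_eq_of_mem_closedBall hdisj hyj]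
    exact hgU j (mem_image_of_mem _ (inv_smul_sub_mem_closedBall (hr j) hyj))
  · rw [glueDiscs_eq_of_forall_notMem_closedBall (not_exists.1 hmem)]
    refine hfU (mem_image_of_mem _ ⟨hyS, fun hy => hmem ?_⟩)
    obtain ⟨j, hyj⟩ := mem_iUnion.1 hy
    exact ⟨j, ball_subset_closedBall hyj⟩

end glueDiscs

theorem stmt11_general {X : Type} [TopologicalSpace X] (U : Set X)
    (f : C(EuclideanSpace ℝ (Fin 2), X))
    {J : Type} [Finite J]
    (x : J → EuclideanSpace ℝ (Fin 2)) (r : J → ℝ) (hr : ∀ j, 0 < r j)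
    (hsub : ∀ j, Metric.closedBall (x j) (r j) ⊆ Metric.ball (0 : EuclideanSpace ℝ (Fin 2)) 1)
    (hdisj : Pairwise fun i j =>
      Disjoint (Metric.closedBall (x i) (r i)) (Metric.closedBall (x j) (r j)))
    (g : J → C(EuclideanSpace ℝ (Fin 2), X))
    (hbdry : ∀ j, ∀ v ∈ Metric.sphere (0 : EuclideanSpace ℝ (Fin 2)) 1,
      g j v = f (x j + r j • v))
    (hgU : ∀ j, g j '' Metric.closedBall (0 : EuclideanSpace ℝ (Fin 2)) 1 ⊆ U)
    (hfU : f '' (Metric.closedBall (0 : EuclideanSpace ℝ (Fin 2)) 1 \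
      ⋃ j, Metric.ball (x j) (r j)) ⊆ U) :
    ∃ G : C(EuclideanSpace ℝ (Fin 2), X),
      (∀ v ∈ Metric.sphere (0 : EuclideanSpace ℝ (Fin 2)) 1, G v = f v) ∧
      G '' Metric.closedBall (0 : EuclideanSpace ℝ (Fin 2)) 1 ⊆ U := by
  have hsphere : ∀ v ∈ sphere (0 : EuclideanSpace ℝ (Fin 2)) 1, v ∉ ⋃ j, ball (x j) (r j) := by
    intro v hv hmem
    obtain ⟨j, hvj⟩ := mem_iUnion.1 hmem
    exact disjoint_left.1 sphere_disjoint_ball hv (hsub j (ball_subset_closedBall hvj))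
  refine ⟨⟨glueDiscs f x r fun j => g j,
    continuous_glueDiscs f.continuous (fun j => (g j).continuous) hr hdisj hbdry⟩, ?_, ?_⟩
  · exact fun v hv => glueDiscs_eq_of_notMem_iUnion_ball hr hdisj hbdry (hsphere v hv)
  · exact glueDiscs_image_subset hr hdisj hgU hfU

/-- The cut-and-paste construction of Lemma 2.4: let `f : D² → X` be continuous,
`{D̂_j}` a finite family of pairwise disjoint closed round subdiscs of the open unit
disc, with centers `x_j` and radii `r_j`.  If each boundary loop `f∘σ_j` bounds a disc
`g_j` inside an open set `U ⊆ X`, and `f` maps `D² \ ⋃ int D̂_j` into `U`, then the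
boundary loop `f|∂D²` is null-homotopic in `U`, i.e. it extends to a map of the disc
with image in `U` (the glued map `g`). -/
theorem stmt11 {X : Type} [TopologicalSpace X] (U : Set X) (hU : IsOpen U)
    (f : C(EuclideanSpace ℝ (Fin 2), X))
    {J : Type} [Finite J]
    (x : J → EuclideanSpace ℝ (Fin 2)) (r : J → ℝ) (hr : ∀ j, 0 < r j)
    (hsub : ∀ j, Metric.closedBall (x j) (r j) ⊆ Metric.ball (0 : EuclideanSpace ℝ (Fin 2)) 1)
    (hdisj : Pairwise fun i j =>
      Disjoint (Metric.closedBall (x i) (r i)) (Metric.closedBall (x j) (r j)))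
    (g : J → C(EuclideanSpace ℝ (Fin 2), X))
    (hbdry : ∀ j, ∀ v ∈ Metric.sphere (0 : EuclideanSpace ℝ (Fin 2)) 1,
      g j v = f (x j + r j • v))
    (hgU : ∀ j, g j '' Metric.closedBall (0 : EuclideanSpace ℝ (Fin 2)) 1 ⊆ U)
    (hfU : f '' (Metric.closedBall (0 : EuclideanSpace ℝ (Fin 2)) 1 \
      ⋃ j, Metric.ball (x j) (r j)) ⊆ U) :
    ∃ G : C(EuclideanSpace ℝ (Fin 2), X),
      (∀ v ∈ Metric.sphere (0 : EuclideanSpace ℝ (Fin 2)) 1, G v = f v) ∧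
      G '' Metric.closedBall (0 : EuclideanSpace ℝ (Fin 2)) 1 ⊆ U :=
  stmt11_general U f x r hr hsub hdisj g hbdry hgU hfU
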